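/- Guaranteed-distortion minimal mutual information equals the ball-covering functional: R_X(d,0) = R_X⁺(d,0), where R_X(d,0) = inf over kernels P_{Y|X} with P(d(X,Y) ≤ d) = 1 of I(X;Y), and R_X⁺(d,0) = inf over distributions Q on Y of E[-log Q(B_d(X))]. -/
import Mathlib


noncomputable section

/-- `q` is a probability mass function on the finite alphabet `α`. -/
def isPMF {α : Type*} [Fintype α] (q : α → ℝ) : Prop :=
  (∀ a, 0 ≤ q a) ∧ ∑ a, q a = 1

/-- Shannon entropy (in bits) of a pmf on a finite alphabet. -/
def ent {α : Type*} [Fintype α] (q : α → ℝ) : ℝ :=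
  ∑ a, -(q a * Real.logb 2 (q a))

/-- Relative entropy (Kullback–Leibler divergence, in bits) between pmfs. -/
def klDiv {α : Type*} [Fintype α] (μ ν : α → ℝ) : ℝ :=
  ∑ a, μ a * Real.logb 2 (μ a / ν a)

/-- Probability, under `Q`, of the distortion-`D` ball around `x`:
`Q(B_D(x)) = Q {y : df x y ≤ D}`. -/
def probBall {X Y : Type*} [Fintype Y] (Q : Y → ℝ) (df : X → Y → ℝ) (D : ℝ) (x : X) : ℝ :=
  ∑ y, if df x y ≤ D then Q y else 0

/-- Output marginal `P_Y` induced by input pmf `p` and kernel `K`. -/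
def marg {X Y : Type*} [Fintype X] [Fintype Y] (p : X → ℝ) (K : X → Y → ℝ) : Y → ℝ :=
  fun y => ∑ x, p x * K x y

/-- Mutual information (in bits) `I(X;Y)` of the joint law `p ⊗ K`,
written as `E_X [ D(K(X) ‖ P_Y) ]`. -/
def mutInfo {X Y : Type*} [Fintype X] [Fintype Y] (p : X → ℝ) (K : X → Y → ℝ) : ℝ :=
  ∑ x, p x * klDiv (K x) (marg p K)

/-- Binary relative entropy `d(α‖q)` (in bits). -/
def bdiv (a q : ℝ) : ℝ :=
  a * Real.logb 2 (a / q) + (1 - a) * Real.logb 2 ((1 - a) / (1 - q))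

section Aux

variable {α : Type*} [Fintype α]

/-- Gibbs' inequality: relative entropy is nonnegative. -/
lemma gibbs_aux (μ ν : α → ℝ) (hμ0 : ∀ a, 0 ≤ μ a) (hμ1 : ∑ a, μ a = 1)
    (hν0 : ∀ a, 0 ≤ ν a) (hν1 : ∑ a, ν a ≤ 1)
    (hac : ∀ a, 0 < μ a → 0 < ν a) : 0 ≤ klDiv μ ν := by
  have hlog2 : (0:ℝ) < Real.log 2 := Real.log_pos (by norm_num)
  have key : ∑ a, μ a * Real.log (ν a / μ a) ≤ 0 := by
    have h1 : ∑ a, μ a * Real.log (ν a / μ a) ≤ ∑ a, (ν a - μ a) := by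
      apply Finset.sum_le_sum
      intro a _
      rcases (hμ0 a).lt_or_eq with h | h
      · have hν := hac a h
        have hd : 0 < ν a / μ a := div_pos hν h
        have hle := Real.log_le_sub_one_of_pos hd
        calc μ a * Real.log (ν a / μ a) ≤ μ a * (ν a / μ a - 1) :=
              mul_le_mul_of_nonneg_left hle h.le
          _ = ν a - μ a := by field_simp
      · rw [← h]; simpa using hν0 a
    have h2 : ∑ a, (ν a - μ a) = (∑ a, ν a) - 1 := by
      rw [Finset.sum_sub_distrib, hμ1]
    linarith
  have hterm : ∀ a, μ a * Real.logb 2 (μ a / ν a)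
      = -(μ a * Real.log (ν a / μ a)) / Real.log 2 := by
    intro a
    rw [Real.logb, ← inv_div (ν a) (μ a), Real.log_inv]
    ring
  rw [klDiv, Finset.sum_congr rfl (fun a _ => hterm a), ← Finset.sum_div,
    Finset.sum_neg_distrib]
  exact div_nonneg (by linarith) hlog2.le

/-- Restricted Gibbs: if `μ` is supported in `S` then `D(μ‖ν) ≥ -log₂ ν(S)`. -/
lemma kl_restrict_ge (μ ν : α → ℝ) (S : Finset α)
    (hμ0 : ∀ a, 0 ≤ μ a) (hμ1 : ∑ a, μ a = 1)
    (hν0 : ∀ a, 0 ≤ ν a) (hν1 : ∑ a, ν a ≤ 1)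
    (hsupp : ∀ a, a ∉ S → μ a = 0)
    (hac : ∀ a, 0 < μ a → 0 < ν a) :
    - Real.logb 2 (∑ a ∈ S, ν a) ≤ klDiv μ ν := by
  classical
  set B := ∑ a ∈ S, ν a with hBdef
  have hex : ∃ a, 0 < μ a := by
    by_contra h
    push_neg at h
    have hz : ∀ a, μ a = 0 := fun a => le_antisymm (h a) (hμ0 a)
    simp [hz] at hμ1
  obtain ⟨a0, ha0⟩ := hex
  have ha0S : a0 ∈ S := by
    by_contra h; rw [hsupp a0 h] at ha0; exact lt_irrefl 0 ha0
  have hBpos : 0 < B := lt_of_lt_of_le (hac a0 ha0)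
      (Finset.single_le_sum (fun a _ => hν0 a) ha0S)
  set ν' : α → ℝ := fun a => if a ∈ S then ν a / B else 0 with hν'def
  have hν'0 : ∀ a, 0 ≤ ν' a := by
    intro a
    by_cases h : a ∈ S <;> simp [hν'def, h, div_nonneg (hν0 a) hBpos.le]
  have hν'1 : ∑ a, ν' a = 1 := by
    simp only [hν'def]
    rw [Finset.sum_ite_mem, Finset.univ_inter, ← Finset.sum_div, div_self hBpos.ne']
  have hac' : ∀ a, 0 < μ a → 0 < ν' a := by
    intro a ha
    have hS : a ∈ S := by by_contra h; rw [hsupp a h] at ha; exact lt_irrefl 0 ha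
    simpa [hν'def, hS] using div_pos (hac a ha) hBpos
  have hgibbs : 0 ≤ klDiv μ ν' := gibbs_aux μ ν' hμ0 hμ1 hν'0 hν'1.le hac'
  have hterm : ∀ a, μ a * Real.logb 2 (μ a / ν a)
      = μ a * Real.logb 2 (μ a / ν' a) - μ a * Real.logb 2 B := by
    intro a
    rcases (hμ0 a).lt_or_eq with h | h
    · have hS : a ∈ S := by by_contra hs; rw [hsupp a hs] at h; exact lt_irrefl 0 h
      have hνa : 0 < ν a := hac a h
      have hν'a : ν' a = ν a / B := by simp [hν'def, hS]
      have heq : μ a / ν' a = (μ a / ν a) * B := by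
        rw [hν'a, div_div_eq_mul_div, mul_div_right_comm]
      rw [heq, Real.logb_mul (div_pos h hνa).ne' hBpos.ne']
      ring
    · rw [← h]; ring
  have hsum : klDiv μ ν = klDiv μ ν' - Real.logb 2 B := by
    unfold klDiv
    rw [Finset.sum_congr rfl (fun a _ => hterm a), Finset.sum_sub_distrib,
      ← Finset.sum_mul, hμ1, one_mul]
  linarith

/-- KL divergence of the normalized restriction of `Q` to `S` against `Q`. -/
lemma kl_cond_eq [DecidableEq α] (Q : α → ℝ) (S : Finset α) (hQ0 : ∀ a, 0 ≤ Q a)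
    (hB : 0 < ∑ a ∈ S, Q a) :
    klDiv (fun a => if a ∈ S then Q a / (∑ b ∈ S, Q b) else 0) Q
      = - Real.logb 2 (∑ a ∈ S, Q a) := by
  classical
  set B := ∑ a ∈ S, Q a with hBdef
  have hterm : ∀ a, (if a ∈ S then Q a / B else 0) *
      Real.logb 2 ((if a ∈ S then Q a / B else 0) / Q a)
      = if a ∈ S then Q a / B * (- Real.logb 2 B) else 0 := by
    intro a
    by_cases hS : a ∈ S
    · simp only [if_pos hS]
      rcases (hQ0 a).lt_or_eq with h | h
      · have heq : Q a / B / Q a = B⁻¹ := by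
          field_simp
        rw [heq, Real.logb_inv]
      · rw [← h]; simp
    · simp [hS]
  simp only [klDiv]
  rw [Finset.sum_congr rfl (fun a _ => hterm a), Finset.sum_ite_mem, Finset.univ_inter,
    ← Finset.sum_mul, ← Finset.sum_div, ← hBdef, div_self hB.ne', one_mul]

end Aux

section Aux2

variable {X Y : Type*} [Fintype X] [Fintype Y]

lemma marg_pmf (p : X → ℝ) (K : X → Y → ℝ) (hp : isPMF p) (hK : ∀ x, isPMF (K x)) :
    isPMF (marg p K) := by
  constructor
  · intro y
    exact Finset.sum_nonneg fun x _ => mul_nonneg (hp.1 x) ((hK x).1 y)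
  · simp only [marg]
    rw [Finset.sum_comm]
    rw [Finset.sum_congr rfl fun x _ => by rw [← Finset.mul_sum, (hK x).2, mul_one]]
    exact hp.2

lemma marg_single_le (p : X → ℝ) (K : X → Y → ℝ) (hp : isPMF p) (hK : ∀ x, isPMF (K x))
    (x : X) (y : Y) : p x * K x y ≤ marg p K y :=
  Finset.single_le_sum (fun x' _ => mul_nonneg (hp.1 x') ((hK x').1 y)) (Finset.mem_univ x)

lemma mutInfo_nonneg (p : X → ℝ) (K : X → Y → ℝ) (hp : isPMF p) (hK : ∀ x, isPMF (K x)) :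
    0 ≤ mutInfo p K := by
  unfold mutInfo
  apply Finset.sum_nonneg
  intro x _
  by_cases hx : 0 < p x
  · apply mul_nonneg hx.le
    apply gibbs_aux (K x) (marg p K) (hK x).1 (hK x).2 (marg_pmf p K hp hK).1
      (marg_pmf p K hp hK).2.le
    intro y hy
    exact lt_of_lt_of_le (mul_pos hx hy) (marg_single_le p K hp hK x y)
  · have : p x = 0 := le_antisymm (not_lt.mp hx) (hp.1 x)
    simp [this]

/-- The output marginal is the optimal comparison measure:
`I(X;Y) ≤ ∑ₓ p(x) D(K(x)‖Q)` for any `Q`. -/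
lemma marg_opt (p : X → ℝ) (K : X → Y → ℝ) (Q : Y → ℝ)
    (hp : isPMF p) (hK : ∀ x, isPMF (K x)) (hQ : isPMF Q)
    (hac : ∀ x y, 0 < p x → 0 < K x y → 0 < Q y) :
    mutInfo p K ≤ ∑ x, p x * klDiv (K x) Q := by
  classical
  have hmP : isPMF (marg p K) := marg_pmf p K hp hK
  have hmac : ∀ y, 0 < marg p K y → 0 < Q y := by
    intro y hy
    obtain ⟨x, -, hx⟩ := Finset.exists_ne_zero_of_sum_ne_zero hy.ne'
    obtain ⟨h1, h2⟩ := mul_ne_zero_iff.mp hx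
    exact hac x y (lt_of_le_of_ne (hp.1 x) (Ne.symm h1))
      (lt_of_le_of_ne ((hK x).1 y) (Ne.symm h2))
  have key : ∀ x y, p x * (K x y * Real.logb 2 (K x y / Q y)) =
      p x * (K x y * Real.logb 2 (K x y / marg p K y)) +
        p x * K x y * Real.logb 2 (marg p K y / Q y) := by
    intro x y
    by_cases hx : 0 < p x
    · by_cases hky : 0 < K x y
      · have hQy := hac x y hx hky
        have hmy : 0 < marg p K y :=
          lt_of_lt_of_le (mul_pos hx hky) (marg_single_le p K hp hK x y)
        have h1 : K x y / Q y = (K x y / marg p K y) * (marg p K y / Q y) := by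
          rw [div_mul_div_comm, mul_comm (K x y) (marg p K y),
            mul_div_mul_left _ _ hmy.ne']
        rw [h1, Real.logb_mul (div_pos hky hmy).ne' (div_pos hmy hQy).ne']
        ring
      · have : K x y = 0 := le_antisymm (not_lt.mp hky) ((hK x).1 y)
        simp [this]
    · have : p x = 0 := le_antisymm (not_lt.mp hx) (hp.1 x)
      simp [this]
  have hRHS : ∑ x, p x * klDiv (K x) Q = mutInfo p K + klDiv (marg p K) Q := by
    unfold mutInfo klDiv
    simp_rw [Finset.mul_sum]
    have hmexp : ∀ y, marg p K y * Real.logb 2 (marg p K y / Q y)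
        = ∑ x, p x * K x y * Real.logb 2 (marg p K y / Q y) := by
      intro y
      rw [← Finset.sum_mul]
      rfl
    rw [Finset.sum_congr rfl fun y _ => hmexp y, Finset.sum_comm (γ := Y),
      ← Finset.sum_add_distrib]
    apply Finset.sum_congr rfl
    intro x _
    rw [← Finset.sum_add_distrib]
    exact Finset.sum_congr rfl fun y _ => key x y
  have hg : 0 ≤ klDiv (marg p K) Q := gibbs_aux _ _ hmP.1 hmP.2 hQ.1 hQ.2.le hmac
  linarith

lemma probBall_eq (Q : Y → ℝ) (df : X → Y → ℝ) (D : ℝ) (x : X) :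
    probBall Q df D x = ∑ y ∈ Finset.univ.filter (fun y => df x y ≤ D), Q y :=
  (Finset.sum_filter _ _).symm

lemma probBall_le_one (Q : Y → ℝ) (df : X → Y → ℝ) (D : ℝ) (x : X) (hQ : isPMF Q) :
    probBall Q df D x ≤ 1 := by
  rw [← hQ.2]
  apply Finset.sum_le_sum
  intro y _
  by_cases h : df x y ≤ D <;> simp [h, hQ.1 y]

/-- Construction of the optimal kernel from an output distribution `Q`. -/
lemma construct_kernel (p : X → ℝ) (df : X → Y → ℝ) (D : ℝ) (Q : Y → ℝ)
    (hp : isPMF p) (hQ : isPMF Q)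
    (hQpos : ∀ x, 0 < p x → 0 < probBall Q df D x) :
    ∃ K : X → Y → ℝ, (∀ x, isPMF (K x)) ∧
      (∀ x, 0 < p x → ∀ y, ¬ df x y ≤ D → K x y = 0) ∧
      mutInfo p K ≤ ∑ x, p x * (- Real.logb 2 (probBall Q df D x)) := by
  classical
  set S : X → Finset Y := fun x => Finset.univ.filter (fun y => df x y ≤ D) with hSdef
  have hPB : ∀ x, probBall Q df D x = ∑ y ∈ S x, Q y := fun x => probBall_eq Q df D x
  set K : X → Y → ℝ := fun x y =>
    if 0 < p x then (if y ∈ S x then Q y / probBall Q df D x else 0) else Q y with hKdef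
  have hKpmf : ∀ x, isPMF (K x) := by
    intro x
    by_cases hx : 0 < p x
    · constructor
      · intro y
        by_cases hS : y ∈ S x <;>
          simp [hKdef, hx, hS, div_nonneg (hQ.1 y) (hQpos x hx).le]
      · simp only [hKdef, if_pos hx]
        rw [Finset.sum_ite_mem, Finset.univ_inter, ← Finset.sum_div, ← hPB x,
          div_self (hQpos x hx).ne']
    · constructor
      · intro y; simp [hKdef, hx, hQ.1 y]
      · simp [hKdef, hx, hQ.2]
  refine ⟨K, hKpmf, ?_, ?_⟩
  · intro x hx y hy
    have hS : y ∉ S x := by simp [hSdef, hy]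
    simp [hKdef, hx, hS]
  · have hac : ∀ x y, 0 < p x → 0 < K x y → 0 < Q y := by
      intro x y hx hk
      simp only [hKdef, if_pos hx] at hk
      by_cases hS : y ∈ S x
      · rw [if_pos hS] at hk
        rcases (hQ.1 y).lt_or_eq with h | h
        · exact h
        · rw [← h] at hk; simp at hk
      · rw [if_neg hS] at hk; exact absurd hk (lt_irrefl 0)
    refine (marg_opt p K Q hp hKpmf hQ hac).trans ?_
    apply le_of_eq
    apply Finset.sum_congr rfl
    intro x _
    by_cases hx : 0 < p x
    · congr 1
      have hKx : K x = fun y => if y ∈ S x then Q y / (∑ b ∈ S x, Q b) else 0 := by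
        funext y
        simp [hKdef, hx, hPB x]
      rw [hKx, kl_cond_eq Q (S x) hQ.1 (by rw [← hPB x]; exact hQpos x hx), ← hPB x]
    · have : p x = 0 := le_antisymm (not_lt.mp hx) (hp.1 x)
      simp [this]

end Aux2

/-- guaranteed-distortion identity `R_X(d,0) = R_X⁺(d,0)`:
the infimum of `I(X;Y)` over kernels satisfying `P(d(X,Y) ≤ D) = 1` equals the
infimum over output distributions `Q` of `E[-log₂ Q(B_D(X))]`. -/
theorem guaranteed_mutual_info_identity {X Y : Type*} [Fintype X] [Fintype Y] [Nonempty Y]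
    (p : X → ℝ) (df : X → Y → ℝ) (D : ℝ) (hp : isPMF p)
    (hball : ∀ x, 0 < p x → ∃ y, df x y ≤ D) :
    sInf {r : ℝ | ∃ K : X → Y → ℝ, (∀ x, isPMF (K x)) ∧
        (∀ x, 0 < p x → ∀ y, ¬ df x y ≤ D → K x y = 0) ∧ r = mutInfo p K} =
    sInf {r : ℝ | ∃ Q : Y → ℝ, isPMF Q ∧ (∀ x, 0 < p x → 0 < probBall Q df D x) ∧
        r = ∑ x, p x * (- Real.logb 2 (probBall Q df D x))} := by
  classical
  set A := {r : ℝ | ∃ K : X → Y → ℝ, (∀ x, isPMF (K x)) ∧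
      (∀ x, 0 < p x → ∀ y, ¬ df x y ≤ D → K x y = 0) ∧ r = mutInfo p K} with hAdef
  set B := {r : ℝ | ∃ Q : Y → ℝ, isPMF Q ∧ (∀ x, 0 < p x → 0 < probBall Q df D x) ∧
      r = ∑ x, p x * (- Real.logb 2 (probBall Q df D x))} with hBdef
  -- the uniform distribution witnesses nonemptiness
  have hcard : (0:ℝ) < (Fintype.card Y : ℝ) := by
    exact_mod_cast Fintype.card_pos
  set Q₀ : Y → ℝ := fun _ => (Fintype.card Y : ℝ)⁻¹ with hQ₀def
  have hQ₀ : isPMF Q₀ := by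
    constructor
    · intro y; exact inv_nonneg.mpr hcard.le
    · simp [hQ₀def, Finset.sum_const, Finset.card_univ, nsmul_eq_mul,
        mul_inv_cancel₀ hcard.ne']
  have hQ₀pos : ∀ x, 0 < p x → 0 < probBall Q₀ df D x := by
    intro x hx
    obtain ⟨y₀, hy₀⟩ := hball x hx
    have h1 : (0:ℝ) < (if df x y₀ ≤ D then Q₀ y₀ else 0) := by
      rw [if_pos hy₀]; exact inv_pos.mpr hcard
    refine lt_of_lt_of_le h1 ?_
    apply Finset.single_le_sum (f := fun y => if df x y ≤ D then Q₀ y else 0)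
      (fun y _ => ?_) (Finset.mem_univ y₀)
    by_cases h : df x y ≤ D <;> simp [h, (hQ₀.1 y)]
  have hBne : B.Nonempty :=
    ⟨_, Q₀, hQ₀, hQ₀pos, rfl⟩
  obtain ⟨K₀, hK₀pmf, hK₀supp, hK₀le⟩ := construct_kernel p df D Q₀ hp hQ₀ hQ₀pos
  have hAne : A.Nonempty := ⟨_, K₀, hK₀pmf, hK₀supp, rfl⟩
  have hAbdd : BddBelow A := by
    refine ⟨0, ?_⟩
    rintro r ⟨K, hK, -, rfl⟩
    exact mutInfo_nonneg p K hp hK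
  have hBbdd : BddBelow B := by
    refine ⟨0, ?_⟩
    rintro r ⟨Q, hQ, hQpos, rfl⟩
    apply Finset.sum_nonneg
    intro x _
    by_cases hx : 0 < p x
    · apply mul_nonneg hx.le
      rw [neg_nonneg]
      exact Real.logb_nonpos (by norm_num) (hQpos x hx).le (probBall_le_one Q df D x hQ)
    · have : p x = 0 := le_antisymm (not_lt.mp hx) (hp.1 x)
      simp [this]
  apply le_antisymm
  · -- sInf A ≤ sInf B via the construction
    apply le_csInf hBne
    rintro r ⟨Q, hQ, hQpos, rfl⟩
    obtain ⟨K, hKpmf, hKsupp, hKle⟩ := construct_kernel p df D Q hp hQ hQpos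
    exact (csInf_le hAbdd ⟨K, hKpmf, hKsupp, rfl⟩).trans hKle
  · -- sInf B ≤ sInf A via the output marginal
    apply le_csInf hAne
    rintro r ⟨K, hK, hsupp, rfl⟩
    set m := marg p K with hmdef
    have hmP : isPMF m := marg_pmf p K hp hK
    have hmpos : ∀ x, 0 < p x → 0 < probBall m df D x := by
      intro x hx
      rw [probBall_eq]
      have h1 : p x * (∑ y ∈ Finset.univ.filter (fun y => df x y ≤ D), K x y)
          ≤ ∑ y ∈ Finset.univ.filter (fun y => df x y ≤ D), m y := by
        rw [Finset.mul_sum]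
        exact Finset.sum_le_sum fun y _ => marg_single_le p K hp hK x y
      have h2 : ∑ y ∈ Finset.univ.filter (fun y => df x y ≤ D), K x y = 1 := by
        rw [← (hK x).2]
        apply Finset.sum_subset (Finset.filter_subset _ _)
        intro y _ hy
        rw [Finset.mem_filter] at hy
        push_neg at hy
        exact hsupp x hx y (not_le.mpr (hy (Finset.mem_univ y)))
      rw [h2, mul_one] at h1
      exact lt_of_lt_of_le hx h1
    refine (csInf_le hBbdd ⟨m, hmP, hmpos, rfl⟩).trans ?_
    unfold mutInfo
    apply Finset.sum_le_sum
    intro x _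
    by_cases hx : 0 < p x
    · apply mul_le_mul_of_nonneg_left _ hx.le
      rw [probBall_eq]
      apply kl_restrict_ge (K x) m (Finset.univ.filter (fun y => df x y ≤ D))
        (hK x).1 (hK x).2 hmP.1 hmP.2.le
      · intro y hy
        rw [Finset.mem_filter] at hy
        push_neg at hy
        exact hsupp x hx y (not_le.mpr (hy (Finset.mem_univ y)))
      · intro y hy
        exact lt_of_lt_of_le (mul_pos hx hy) (marg_single_le p K hp hK x y)
    · have : p x = 0 := le_antisymm (not_lt.mp hx) (hp.1 x)
      simp [this]
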